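/- (Oriented regions cover the rank-2 matrices.) Let n ≥ 2. For every real 2×n matrix C of rank 2 there exist a word (i₁,…,iₙ) listing each element of {1,…,n} exactly once and signs ε : {1,…,n} → {−1,+1} such that C ∈ R(ε_{i₁}i₁,…,ε_{iₙ}iₙ), i.e. ε_{i_a}·ε_{i_b}·p_{i_a i_b}(C) ≥ 0 for all 1 ≤ a < b ≤ n. -/
import Mathlib


namespace OSD

/-- `p_{ij}(C) = C_{1,i}·C_{2,j} − C_{1,j}·C_{2,i}` for a real `2×n` matrix `C`. -/
def pluck {n : ℕ} (C : Matrix (Fin 2) (Fin n) ℝ) (i j : Fin n) : ℝ :=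
  C 0 i * C 1 j - C 0 j * C 1 i

/-- The oriented region `R(ε_{i₁}i₁, …, ε_{iₙ}iₙ)` attached to the word
`(i₁,…,iₙ) = (w 1, …, w n)` and the signs `ε`: the set of real `2×n` matrices `C` of
rank `2` with `ε_{i_a}·ε_{i_b}·p_{i_a i_b}(C) ≥ 0` for all positions `a < b`. -/
def orientedRegion {n : ℕ} (w : Equiv.Perm (Fin n)) (ε : Fin n → ℝ) :
    Set (Matrix (Fin 2) (Fin n) ℝ) :=
  {C | C.rank = 2 ∧ ∀ a b : Fin n, a < b → 0 ≤ ε (w a) * ε (w b) * pluck C (w a) (w b)}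

end OSD


/-- oriented regions cover the rank-2 matrices: every real `2×n` matrix of
rank `2` lies in some oriented region `R(ε_{i₁}i₁,…,ε_{iₙ}iₙ)`. -/
theorem statement12 {n : ℕ} (hn : 2 ≤ n)
    (C : Matrix (Fin 2) (Fin n) ℝ) (hC : C.rank = 2) :
    ∃ (w : Equiv.Perm (Fin n)) (ε : Fin n → ℝ),
      (∀ i, ε i = 1 ∨ ε i = -1) ∧ C ∈ OSD.orientedRegion w ε := by
  classical
  -- choose signs putting each column in the closed upper half-plane
  set ε : Fin n → ℝ := fun i =>
    if 0 < C 1 i ∨ (C 1 i = 0 ∧ 0 ≤ C 0 i) then 1 else -1 with hε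
  set x : Fin n → ℝ := fun i => ε i * C 0 i with hxdef
  set y : Fin n → ℝ := fun i => ε i * C 1 i with hydef
  have hε1 : ∀ i, ε i = 1 ∨ ε i = -1 := by
    intro i; simp only [hε]; split <;> simp
  have hy : ∀ i, 0 ≤ y i := by
    intro i
    by_cases h : 0 < C 1 i ∨ (C 1 i = 0 ∧ 0 ≤ C 0 i)
    · have : ε i = 1 := by simp [hε, h]
      rcases h with h | ⟨h, _⟩
      · simp [hydef, this]; linarith
      · simp [hydef, this, h]
    · have hεi : ε i = -1 := by simp [hε, h]
      push_neg at h
      rcases lt_trichotomy (C 1 i) 0 with h1 | h1 | h1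
      · simp only [hydef, hεi]; nlinarith
      · simp [hydef, h1]
      · exact absurd h1 h.1.not_gt
  have hx0 : ∀ i, y i = 0 → 0 ≤ x i := by
    intro i hyi
    by_cases h : 0 < C 1 i ∨ (C 1 i = 0 ∧ 0 ≤ C 0 i)
    · have hεi : ε i = 1 := by simp [hε, h]
      simp only [hydef, hεi, one_mul] at hyi
      rcases h with h | ⟨_, h⟩
      · exact absurd hyi h.ne'
      · simp [hxdef, hεi, h]
    · have hεi : ε i = -1 := by simp [hε, h]
      push_neg at h
      simp only [hydef, hεi, neg_mul, one_mul, neg_eq_zero] at hyi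
      have := h.2 hyi
      simp only [hxdef, hεi]; nlinarith
  -- sorting key: angle surrogate
  set key : Fin n → WithBot ℝ := fun i => if y i = 0 then ⊥ else ((-(x i / y i) : ℝ) : WithBot ℝ)
    with hkey
  have main : ∀ u v : Fin n, key u ≤ key v → 0 ≤ x u * y v - x v * y u := by
    intro u v huv
    by_cases hu : y u = 0
    · have := hx0 u hu
      have := hy v
      rw [hu]; nlinarith
    · have hyu : 0 < y u := lt_of_le_of_ne (hy u) (Ne.symm hu)
      have hv : y v ≠ 0 := by
        intro hv
        simp only [hkey, hu, hv, if_neg hu, if_pos hv, le_bot_iff] at huv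
        exact (WithBot.coe_ne_bot huv)
      have hyv : 0 < y v := lt_of_le_of_ne (hy v) (Ne.symm hv)
      simp only [hkey, if_neg hu, if_neg hv, WithBot.coe_le_coe, neg_le_neg_iff] at huv
      have := (div_le_div_iff₀ hyv hyu).mp huv
      nlinarith
  refine ⟨Tuple.sort key, ε, hε1, hC, ?_⟩
  intro a b hab
  have hmono := Tuple.monotone_sort key hab.le
  have h := main _ _ hmono
  have : ε (Tuple.sort key a) * ε (Tuple.sort key b) *
      OSD.pluck C (Tuple.sort key a) (Tuple.sort key b)
      = x (Tuple.sort key a) * y (Tuple.sort key b)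
        - x (Tuple.sort key b) * y (Tuple.sort key a) := by
    simp only [hxdef, hydef, OSD.pluck]; ring
  rw [this]; exact h
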